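/- arXiv:1511.02486 — 7 statements merged into one kernel-verified Lean document; each statement's English description precedes it below -/
import Mathlib

section
/- For any simple graph H on n ≥ k vertices, there exists a k-vertex subset S of V(H) such that the density of the induced subgraph H[S] is at least ((k-1)/(n-1)) times the density of H, where the density of a graph is its number of edges divided by its number of vertices. -/
open Classical in
/-- The set of edges of `H` with both endpoints in `S`. -/
noncomputable def edgesIn {V : Type*} [Fintype V] [DecidableEq V]
    (H : SimpleGraph V) (S : Finset V) : Finset (Sym2 V) :=
  Finset.univ.filter (fun e => e ∈ H.edgeSet ∧ ∀ v ∈ e, v ∈ S)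

open Finset in
lemma count_supersets {α : Type*} [DecidableEq α] (s t : Finset α) (k : ℕ) (hts : t ⊆ s)
    (htk : t.card ≤ k) :
    ((s.powersetCard k).filter (fun A => t ⊆ A)).card = (s.card - t.card).choose (k - t.card) := by
  rw [show (s.card - t.card).choose (k - t.card) = ((s \ t).powersetCard (k - t.card)).card by
    rw [Finset.card_powersetCard, Finset.card_sdiff_of_subset hts]]
  apply Finset.card_bij' (fun A _ => A \ t) (fun B _ => B ∪ t)
  · intro A hA
    simp only [mem_filter, mem_powersetCard] at hA
    rw [Finset.mem_powersetCard]
    exact ⟨sdiff_subset_sdiff hA.1.1 le_rfl, by rw [card_sdiff_of_subset hA.2, hA.1.2]⟩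
  · intro B hB
    rw [Finset.mem_powersetCard] at hB
    simp only [mem_filter, mem_powersetCard]
    refine ⟨⟨union_subset (hB.1.trans (sdiff_subset)) hts, ?_⟩, subset_union_right⟩
    rw [card_union_of_disjoint (Finset.sdiff_disjoint.mono_left hB.1), hB.2]
    omega
  · intro A hA
    simp only [mem_filter] at hA
    rw [sdiff_union_of_subset hA.2]
  · intro B hB
    rw [Finset.mem_powersetCard] at hB
    rw [union_sdiff_right, sdiff_eq_self_of_disjoint (Finset.sdiff_disjoint.mono_left hB.1)]

open Classical in
lemma edgesIn_eq {V : Type*} [Fintype V] [DecidableEq V] (H : SimpleGraph V) (S : Finset V) :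
    edgesIn H S = H.edgeFinset.filter (fun e => ∀ v ∈ e, v ∈ S) := by
  ext e
  simp [edgesIn, SimpleGraph.mem_edgeFinset]

open Finset in
open Classical in
lemma sum_edgesIn {V : Type*} [Fintype V] [DecidableEq V] (H : SimpleGraph V) (k : ℕ)
    (hk2 : 2 ≤ k) (hkn : k ≤ Fintype.card V) :
    ∑ S ∈ (Finset.univ : Finset V).powersetCard k, (edgesIn H S).card
      = (edgesIn H Finset.univ).card * (Fintype.card V - 2).choose (k - 2) := by
  have hEuniv : (edgesIn H Finset.univ).card = H.edgeFinset.card := by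
    rw [edgesIn_eq]
    congr 1
    exact Finset.filter_true_of_mem fun e _ => fun v _ => Finset.mem_univ v
  rw [hEuniv]
  have key : ∀ S : Finset V, (edgesIn H S).card
      = ∑ e ∈ H.edgeFinset, if (∀ v ∈ e, v ∈ S) then 1 else 0 := by
    intro S
    rw [edgesIn_eq, Finset.card_filter]
  simp only [key]
  rw [Finset.sum_comm]
  rw [Finset.sum_congr rfl (fun e he => ?_), Finset.sum_const, smul_eq_mul]
  have hadj : ¬ e.IsDiag := by
    rw [SimpleGraph.mem_edgeFinset] at he
    exact H.not_isDiag_of_mem_edgeSet he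
  obtain ⟨a, b⟩ := e
  have hab : a ≠ b := by simpa [Sym2.mk_isDiag_iff] using hadj
  have hcond : ∀ x : Finset V, (∀ v ∈ s(a, b), v ∈ x) ↔ ({a, b} : Finset V) ⊆ x := by
    intro x
    simp [Sym2.mem_iff, Finset.insert_subset_iff]
  calc (∑ x ∈ powersetCard k univ, if ∀ v ∈ s(a, b), v ∈ x then 1 else 0)
      = ((univ.powersetCard k).filter (fun A => ({a, b} : Finset V) ⊆ A)).card := by
        rw [Finset.card_filter]
        exact Finset.sum_congr rfl fun x _ => if_congr (hcond x) rfl rfl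
    _ = (Fintype.card V - 2).choose (k - 2) := by
        rw [count_supersets _ _ _ (Finset.subset_univ _)
          (by rw [Finset.card_pair hab]; exact hk2), Finset.card_pair hab, Finset.card_univ]

lemma choose_id (n k : ℕ) (hk2 : 2 ≤ k) (hkn : k ≤ n) :
    n.choose k * (k * (k - 1)) = n * (n - 1) * (n - 2).choose (k - 2) := by
  obtain ⟨j, rfl⟩ : ∃ j, k = j + 2 := ⟨k - 2, by omega⟩
  obtain ⟨m, rfl⟩ : ∃ m, n = m + 2 := ⟨n - 2, by omega⟩
  simp only [Nat.add_sub_cancel, show j + 2 - 1 = j + 1 from rfl, show m + 2 - 1 = m + 1 from rfl]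
  have h1 : (m + 1) * Nat.choose m j = Nat.choose (m + 1) (j + 1) * (j + 1) :=
    Nat.add_one_mul_choose_eq m j
  have h2 : (m + 2) * Nat.choose (m + 1) (j + 1) = Nat.choose (m + 2) (j + 2) * (j + 2) :=
    Nat.add_one_mul_choose_eq (m + 1) (j + 1)
  calc (m + 2).choose (j + 2) * ((j + 2) * (j + 1))
      = (m + 2).choose (j + 2) * (j + 2) * (j + 1) := by ring
    _ = (m + 2) * (m + 1).choose (j + 1) * (j + 1) := by rw [← h2]
    _ = (m + 2) * ((m + 1).choose (j + 1) * (j + 1)) := by ring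
    _ = (m + 2) * ((m + 1) * m.choose j) := by rw [← h1]
    _ = (m + 2) * (m + 1) * m.choose j := by ring

open Finset in
/-- For any simple graph `H` on `n ≥ k` vertices (`k ≥ 1`), there is a `k`-vertex subset `S`
such that the density of `H[S]` is at least `((k-1)/(n-1))` times the density of `H`. -/
theorem stmt1 {V : Type*} [Fintype V] [DecidableEq V] (H : SimpleGraph V) (k : ℕ)
    (hk1 : 1 ≤ k) (hkn : k ≤ Fintype.card V) :
    ∃ S : Finset V, S.card = k ∧
      ((k : ℚ) - 1) / ((Fintype.card V : ℚ) - 1) *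
          (((edgesIn H Finset.univ).card : ℚ) / (Fintype.card V : ℚ))
        ≤ ((edgesIn H S).card : ℚ) / (k : ℚ) := by
  rcases Nat.lt_or_ge k 2 with hk | hk2
  · have hk1' : k = 1 := by omega
    subst hk1'
    obtain ⟨S, _, hS⟩ := Finset.exists_subset_card_eq (show 1 ≤ (univ : Finset V).card by
      simpa using hkn)
    refine ⟨S, hS, ?_⟩
    norm_num
  · have hn2 : 2 ≤ Fintype.card V := le_trans hk2 hkn
    have hsum := sum_edgesIn H k hk2 hkn
    have hne : ((univ : Finset V).powersetCard k).Nonempty := by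
      rw [Finset.powersetCard_nonempty, Finset.card_univ]; exact hkn
    obtain ⟨S, hSmem, hSle⟩ := Finset.exists_le_of_sum_le (f := fun _ : Finset V =>
        (edgesIn H Finset.univ).card * (Fintype.card V - 2).choose (k - 2))
        (g := fun S => (Fintype.card V).choose k * (edgesIn H S).card) hne (by
      rw [Finset.sum_const, ← Finset.mul_sum, hsum, Finset.card_powersetCard, Finset.card_univ,
        smul_eq_mul])
    have hScard : S.card = k := by
      rw [Finset.mem_powersetCard] at hSmem; exact hSmem.2
    refine ⟨S, hScard, ?_⟩
    set n := Fintype.card V with hn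
    set E := (edgesIn H Finset.univ).card with hE
    set f := (edgesIn H S).card with hf
    have hid := choose_id n k hk2 hkn
    have hpos : 0 < (n - 2).choose (k - 2) := Nat.choose_pos (by omega)
    have hnat : E * (k * (k - 1)) ≤ f * (n * (n - 1)) := by
      have h3 : E * (n - 2).choose (k - 2) * (k * (k - 1))
          ≤ n.choose k * f * (k * (k - 1)) := Nat.mul_le_mul_right _ hSle
      have h4 : n.choose k * f * (k * (k - 1)) = f * (n * (n - 1)) * (n - 2).choose (k - 2) := by
        calc n.choose k * f * (k * (k - 1)) = f * (n.choose k * (k * (k - 1))) := by ring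
          _ = f * (n * (n - 1) * (n - 2).choose (k - 2)) := by rw [hid]
          _ = f * (n * (n - 1)) * (n - 2).choose (k - 2) := by ring
      have h5 : E * (n - 2).choose (k - 2) * (k * (k - 1))
          = E * (k * (k - 1)) * (n - 2).choose (k - 2) := by ring
      rw [h4, h5] at h3
      exact Nat.le_of_mul_le_mul_right h3 hpos
    have hk1le : 1 ≤ k := hk1
    have hn1le : 1 ≤ n := by omega
    have hq : (E : ℚ) * ((k : ℚ) * ((k : ℚ) - 1)) ≤ (f : ℚ) * ((n : ℚ) * ((n : ℚ) - 1)) := by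
      have h := (Nat.cast_le (α := ℚ)).mpr hnat
      push_cast [Nat.cast_sub hk1le, Nat.cast_sub hn1le] at h
      convert h using 1 <;> push_cast <;> ring
    have hkQ : (1:ℚ) ≤ (k:ℚ) := by exact_mod_cast hk1
    have hnQ : (2:ℚ) ≤ (n:ℚ) := by exact_mod_cast hn2
    rw [div_mul_div_comm, div_le_div_iff₀ (by nlinarith) (by linarith)]
    nlinarith [hq]
end

section
/- Let H be a simple graph containing an induced subgraph K on v vertices with ℓ edges, where v ≥ k ≥ 1. Then H contains a k-vertex induced subgraph with at least ℓ·k(k-1)/(v(v-1)) edges. -/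
open Classical in
lemma edgesIn_erase {V : Type*} [Fintype V] [DecidableEq V]
    (H : SimpleGraph V) (C : Finset V) (x : V) :
    edgesIn H (C.erase x) = (edgesIn H C).filter (fun e => x ∉ e) := by
  ext e
  simp only [edgesIn, Finset.mem_filter, Finset.mem_univ, true_and, Finset.mem_erase]
  constructor
  · rintro ⟨he, h⟩
    refine ⟨⟨he, fun v hv => (h v hv).2⟩, fun hx => (h x hx).1 rfl⟩
  · rintro ⟨⟨he, h⟩, hx⟩
    exact ⟨he, fun v hv => ⟨fun hvx => hx (hvx ▸ hv), h v hv⟩⟩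

open Classical in
lemma sum_deg {V : Type*} [Fintype V] [DecidableEq V]
    (H : SimpleGraph V) (C : Finset V) :
    ∑ x ∈ C, ((edgesIn H C).filter (fun e => x ∈ e)).card = 2 * (edgesIn H C).card := by
  have key : ∀ e ∈ edgesIn H C, (C.filter (fun x => x ∈ e)).card = 2 := by
    intro e he
    simp only [edgesIn, Finset.mem_filter, Finset.mem_univ, true_and] at he
    obtain ⟨he, hmem⟩ := he
    induction e with
    | h a b =>
      have hadj : H.Adj a b := he
      have hab : a ≠ b := hadj.ne
      have : C.filter (fun x => x ∈ s(a,b)) = {a, b} := by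
        ext y
        simp only [Finset.mem_filter, Sym2.mem_iff, Finset.mem_insert, Finset.mem_singleton]
        constructor
        · rintro ⟨_, h⟩; exact h
        · rintro (rfl | rfl)
          · exact ⟨hmem _ (by simp), Or.inl rfl⟩
          · exact ⟨hmem _ (by simp), Or.inr rfl⟩
      rw [this, Finset.card_insert_of_notMem (by simpa using hab), Finset.card_singleton]
  calc ∑ x ∈ C, ((edgesIn H C).filter (fun e => x ∈ e)).card
      = ∑ x ∈ C, ∑ e ∈ edgesIn H C, if x ∈ e then 1 else 0 := by
        simp only [Finset.card_filter]
    _ = ∑ e ∈ edgesIn H C, ∑ x ∈ C, if x ∈ e then 1 else 0 := Finset.sum_comm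
    _ = ∑ e ∈ edgesIn H C, (C.filter (fun x => x ∈ e)).card := by
        simp only [Finset.card_filter]
    _ = ∑ e ∈ edgesIn H C, 2 := Finset.sum_congr rfl key
    _ = 2 * (edgesIn H C).card := by rw [Finset.sum_const, smul_eq_mul, mul_comm]

open Classical in
lemma aux_stmt2 {V : Type*} [Fintype V] [DecidableEq V] (H : SimpleGraph V)
    (k : ℕ) (hk2 : 2 ≤ k) :
    ∀ d : ℕ, ∀ C : Finset V, C.card = k + d →
    ∃ S : Finset V, S.card = k ∧
      ((edgesIn H C).card : ℚ) * k * ((k : ℚ) - 1) /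
        (((k + d : ℕ) : ℚ) * (((k + d : ℕ) : ℚ) - 1)) ≤ ((edgesIn H S).card : ℚ) := by
  intro d
  induction d with
  | zero =>
    intro C hC
    refine ⟨C, by simpa using hC, ?_⟩
    have hkpos : (0:ℚ) < (k:ℚ) * ((k:ℚ) - 1) := by
      have : (2:ℚ) ≤ (k:ℚ) := by exact_mod_cast hk2
      nlinarith
    have hk0 : ((k + 0 : ℕ) : ℚ) = (k : ℚ) := by norm_num
    rw [hk0, div_le_iff₀ hkpos]
    push_cast
    ring_nf
    rfl
  | succ d ih =>
    intro C hC
    set F := edgesIn H C with hF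
    set n := k + d + 1 with hn
    have hCcard : C.card = n := by omega
    have hne : C.Nonempty := Finset.card_pos.mp (by omega)
    -- find a vertex of at most average degree
    have hmin : ∃ x ∈ C, (F.filter (fun e => x ∈ e)).card * n ≤ 2 * F.card := by
      by_contra h
      push_neg at h
      have h1 : ∑ x ∈ C, 2 * F.card < ∑ x ∈ C, (F.filter (fun e => x ∈ e)).card * n :=
        Finset.sum_lt_sum_of_nonempty hne h
      rw [Finset.sum_const, ← Finset.sum_mul, sum_deg, hCcard, smul_eq_mul] at h1
      rw [mul_comm] at h1
      exact lt_irrefl _ h1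
    obtain ⟨x, hxC, hxdeg⟩ := hmin
    set C' := C.erase x with hC'
    have hC'card : C'.card = k + d := by
      rw [hC', Finset.card_erase_of_mem hxC]; omega
    obtain ⟨S, hScard, hSbound⟩ := ih C' hC'card
    refine ⟨S, hScard, le_trans ?_ hSbound⟩
    -- compare the two ratios
    set dx := (F.filter (fun e => x ∈ e)).card with hdx
    have hsplit : dx + (edgesIn H C').card = F.card := by
      rw [hC', edgesIn_erase, ← hF, hdx]
      exact Finset.card_filter_add_card_filter_not _
    set m : ℕ := k + d with hm
    have hm2 : 2 ≤ m := by omega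
    have hmQ : (2:ℚ) ≤ (m:ℚ) := by exact_mod_cast hm2
    have hden1 : (0:ℚ) < ((n:ℕ):ℚ) * (((n:ℕ):ℚ) - 1) := by
      have : (3:ℚ) ≤ (n:ℚ) := by exact_mod_cast (by omega : 3 ≤ n)
      nlinarith
    have hden2 : (0:ℚ) < ((m:ℕ):ℚ) * (((m:ℕ):ℚ) - 1) := by nlinarith
    have hcast : ((n:ℕ):ℚ) = (m:ℚ) + 1 := by
      rw [hn, hm]; push_cast; ring
    have hrw : k + (d + 1) = n := by omega
    rw [hrw, div_le_div_iff₀ hden1 hden2]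
    have hdegQ : (dx:ℚ) * ((m:ℚ) + 1) ≤ 2 * (F.card:ℚ) := by
      rw [← hcast]; exact_mod_cast hxdeg
    have hsplitQ : (dx:ℚ) + ((edgesIn H C').card:ℚ) = (F.card:ℚ) := by exact_mod_cast hsplit
    have h1 : (F.card:ℚ) * ((m:ℚ) - 1) ≤ ((edgesIn H C').card:ℚ) * ((m:ℚ) + 1) := by
      nlinarith
    have hkQ : (2:ℚ) ≤ (k:ℚ) := by exact_mod_cast hk2
    have hfact : (0:ℚ) ≤ (k:ℚ) * ((k:ℚ) - 1) * (m:ℚ) :=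
      mul_nonneg (mul_nonneg (by linarith) (by linarith)) (by linarith)
    have h2 := mul_le_mul_of_nonneg_right h1 hfact
    rw [hcast]
    push_cast
    nlinarith [h2]

/-- If `H` contains an induced subgraph `H[C]` on `v` vertices with `ℓ` edges, `v ≥ k ≥ 1`,
then `H` contains a `k`-vertex induced subgraph with at least `ℓ·k(k-1)/(v(v-1))` edges. -/
theorem stmt2 {V : Type*} [Fintype V] [DecidableEq V] (H : SimpleGraph V)
    (C : Finset V) (v ℓ k : ℕ) (hv : C.card = v) (hl : (edgesIn H C).card = ℓ)
    (hk : 1 ≤ k) (hkv : k ≤ v) :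
    ∃ S : Finset V, S.card = k ∧
      ((ℓ : ℚ) * (k : ℚ) * ((k : ℚ) - 1)) / ((v : ℚ) * ((v : ℚ) - 1))
        ≤ ((edgesIn H S).card : ℚ) := by
  rcases eq_or_lt_of_le hk with hk1 | hk2
  · -- k = 1
    obtain ⟨S, _, hScard⟩ := Finset.exists_subset_card_eq (hkv.trans_eq hv.symm)
    refine ⟨S, hScard, ?_⟩
    rw [← hk1]
    push_cast
    simp
  · -- 2 ≤ k
    have hC : C.card = k + (v - k) := by omega
    obtain ⟨S, hScard, hbound⟩ := aux_stmt2 H k hk2 (v - k) C hC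
    refine ⟨S, hScard, ?_⟩
    have hrw : k + (v - k) = v := by omega
    rw [hrw, hl] at hbound
    exact hbound
end

section
/- (Cut cover via Gomory–Hu tree) Let H = (V,E) be a capacitated undirected graph and C ⊆ V any vertex subset. Then there exist at most |V| - 1 pairs of vertices P, and for each pair {w,v} ∈ P a minimum-capacity w-v-cut C_{wv} ⊆ V, such that every edge of δ_H(C) lies in δ_H(C_{wv}) for some {w,v} ∈ P. -/
/-- Edge `i` (with endpoints `ends i`) crosses the vertex set `S`,
i.e. it has exactly one endpoint in `S`. -/
def crosses {V ι : Type*} (ends : ι → V × V) (S : Finset V) (i : ι) : Prop :=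
  ((ends i).1 ∈ S ∧ (ends i).2 ∉ S) ∨ ((ends i).1 ∉ S ∧ (ends i).2 ∈ S)

open Classical in
/-- Capacity `u(δ(S))` of the cut determined by `S`. -/
noncomputable def cutCap {V ι : Type*} [Fintype ι] (ends : ι → V × V) (u : ι → ℕ)
    (S : Finset V) : ℕ :=
  ∑ i ∈ Finset.univ.filter (fun i => crosses ends S i), u i

open Classical

/-- `S` separates `x` and `y`. -/
def sep {V : Type*} (S : Finset V) (x y : V) : Prop :=
  (x ∈ S ∧ y ∉ S) ∨ (x ∉ S ∧ y ∈ S)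

lemma aux {V ι : Type*} [Fintype V] [Fintype ι] [DecidableEq V]
    (ends : ι → V × V) (u : ι → ℕ) (C : Finset V) :
    ∀ (k : ℕ) (P : Finset (V × V)) (cut : V × V → Finset V),
      (∀ p ∈ P, p.1 ≠ p.2 ∧ p.1 ∈ cut p ∧ p.2 ∉ cut p ∧
        ∀ S : Finset V, p.1 ∈ S → p.2 ∉ S → cutCap ends u (cut p) ≤ cutCap ends u S) →
      P.card + 1 ≤ (Finset.univ.image (fun z => P.filter (fun p => z ∈ cut p))).card →
      ((C ×ˢ Cᶜ).filter (fun q => ∀ p ∈ P, ¬ sep (cut p) q.1 q.2)).card ≤ k →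
      ∃ (P' : Finset (V × V)) (cut' : V × V → Finset V),
        P'.card ≤ Fintype.card V - 1 ∧
        (∀ p ∈ P', p.1 ≠ p.2 ∧ p.1 ∈ cut' p ∧ p.2 ∉ cut' p ∧
          ∀ S : Finset V, p.1 ∈ S → p.2 ∉ S → cutCap ends u (cut' p) ≤ cutCap ends u S) ∧
        (∀ x ∈ C, ∀ y ∈ Cᶜ, ∃ p ∈ P', sep (cut' p) x y) := by
  intro k
  induction k with
  | zero =>
    intro P cut hgood hinv hB
    refine ⟨P, cut, ?_, hgood, ?_⟩
    · have h1 : (Finset.univ.image (fun z => P.filter (fun p => z ∈ cut p))).card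
          ≤ Fintype.card V := by
        calc _ ≤ (Finset.univ : Finset V).card := Finset.card_image_le
        _ = Fintype.card V := Finset.card_univ
      omega
    · intro x hx y hy
      by_contra h
      push_neg at h
      have : (x, y) ∈ (C ×ˢ Cᶜ).filter (fun q => ∀ p ∈ P, ¬ sep (cut p) q.1 q.2) := by
        simp only [Finset.mem_filter, Finset.mem_product]
        exact ⟨⟨hx, hy⟩, h⟩
      have := Finset.card_pos.mpr ⟨_, this⟩
      omega
  | succ k ih =>
    intro P cut hgood hinv hB
    set B := (C ×ˢ Cᶜ).filter (fun q => ∀ p ∈ P, ¬ sep (cut p) q.1 q.2) with hBdef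
    by_cases hBe : B = ∅
    · -- same as the zero case
      refine ⟨P, cut, ?_, hgood, ?_⟩
      · have h1 : (Finset.univ.image (fun z => P.filter (fun p => z ∈ cut p))).card
            ≤ Fintype.card V := by
          calc _ ≤ (Finset.univ : Finset V).card := Finset.card_image_le
          _ = Fintype.card V := Finset.card_univ
        omega
      · intro x hx y hy
        by_contra h
        push_neg at h
        have : (x, y) ∈ B := by
          simp only [hBdef, Finset.mem_filter, Finset.mem_product]
          exact ⟨⟨hx, hy⟩, h⟩
        simp [hBe] at this
    · obtain ⟨q, hq⟩ := Finset.nonempty_iff_ne_empty.mpr hBe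
      have hqmem := hq
      simp only [hBdef, Finset.mem_filter, Finset.mem_product] at hqmem
      obtain ⟨⟨hq1, hq2⟩, hqns⟩ := hqmem
      have hq2' : q.2 ∉ C := Finset.mem_compl.mp hq2
      have hne : q.1 ≠ q.2 := fun h => hq2' (h ▸ hq1)
      -- choose a minimum q.1-q.2 cut S
      obtain ⟨S, hSmem, hSmin⟩ := Finset.exists_min_image
        ((Finset.univ : Finset (Finset V)).filter (fun T => q.1 ∈ T ∧ q.2 ∉ T))
        (cutCap ends u)
        ⟨{q.1}, by simp [hne, Ne.symm hne]⟩
      simp only [Finset.mem_filter, Finset.mem_univ, true_and] at hSmem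
      obtain ⟨hxS, hyS⟩ := hSmem
      have hSmin' : ∀ T : Finset V, q.1 ∈ T → q.2 ∉ T → cutCap ends u S ≤ cutCap ends u T := by
        intro T h1 h2
        exact hSmin T (by simp [h1, h2])
      have hqP : q ∉ P := by
        intro hqP
        obtain ⟨_, h1, h2, _⟩ := hgood q hqP
        exact hqns q hqP (Or.inl ⟨h1, h2⟩)
      set P' := insert q P with hP'
      set cut' := Function.update cut q S with hcut'
      have hcutP : ∀ p ∈ P, cut' p = cut p := by
        intro p hp
        have hpq : p ≠ q := by rintro rfl; exact hqP hp
        exact Function.update_of_ne hpq _ _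
      have hcutq : cut' q = S := Function.update_self _ _ _
      have hgood' : ∀ p ∈ P', p.1 ≠ p.2 ∧ p.1 ∈ cut' p ∧ p.2 ∉ cut' p ∧
          ∀ T : Finset V, p.1 ∈ T → p.2 ∉ T → cutCap ends u (cut' p) ≤ cutCap ends u T := by
        intro p hp
        rcases Finset.mem_insert.mp hp with h | h
        · subst h; rw [hcutq]; exact ⟨hne, hxS, hyS, hSmin'⟩
        · rw [hcutP p h]; exact hgood p h
      -- invariant for P'
      set σold : V → Finset (V × V) := fun z => P.filter (fun p => z ∈ cut p) with hσold
      set σnew : V → Finset (V × V) := fun z => P'.filter (fun p => z ∈ cut' p) with hσnew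
      have hkey : ∀ z, σold z = (σnew z).erase q := by
        intro z
        ext p
        simp only [hσold, hσnew, Finset.mem_erase, Finset.mem_filter, hP',
          Finset.mem_insert]
        constructor
        · rintro ⟨hpP, hz⟩
          have hpq : p ≠ q := by rintro rfl; exact hqP hpP
          exact ⟨hpq, Or.inr hpP, by rwa [hcutP p hpP]⟩
        · rintro ⟨hpq, hp, hz⟩
          rcases hp with h | h
          · exact absurd h hpq
          · exact ⟨h, by rwa [hcutP p h] at hz⟩
      have himg : Finset.univ.image σold
          = (Finset.univ.image σnew).image (fun A => A.erase q) := by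
        rw [Finset.image_image]
        exact Finset.image_congr (fun z _ => hkey z)
      have hle : (Finset.univ.image σold).card ≤ (Finset.univ.image σnew).card := by
        rw [himg]; exact Finset.card_image_le
      have hsame : σold q.1 = σold q.2 := by
        ext p
        simp only [hσold, Finset.mem_filter]
        constructor
        · rintro ⟨hp, hz⟩
          refine ⟨hp, ?_⟩
          by_contra h2
          exact hqns p hp (Or.inl ⟨hz, h2⟩)
        · rintro ⟨hp, hz⟩
          refine ⟨hp, ?_⟩
          by_contra h2
          exact hqns p hp (Or.inr ⟨h2, hz⟩)
      have hdiff : σnew q.1 ≠ σnew q.2 := by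
        intro h
        have h1 : q ∈ σnew q.1 := by
          simp only [hσnew, Finset.mem_filter, hP']
          exact ⟨Finset.mem_insert_self _ _, by rw [hcutq]; exact hxS⟩
        have h2 : q ∉ σnew q.2 := by
          simp only [hσnew, Finset.mem_filter, hcutq]
          intro hc
          exact hyS hc.2
        exact h2 (h ▸ h1)
      have hstrict : (Finset.univ.image σold).card + 1 ≤ (Finset.univ.image σnew).card := by
        by_contra h
        push_neg at h
        have heq : ((Finset.univ.image σnew).image (fun A => A.erase q)).card
            = (Finset.univ.image σnew).card := by
          rw [← himg]; omega
        have hinj := Finset.card_image_iff.mp heq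
        have := hinj (Finset.mem_coe.mpr (Finset.mem_image_of_mem σnew (Finset.mem_univ q.1)))
          (Finset.mem_coe.mpr (Finset.mem_image_of_mem σnew (Finset.mem_univ q.2)))
          (by show (σnew q.1).erase q = (σnew q.2).erase q
              rw [← hkey q.1, ← hkey q.2, hsame])
        exact hdiff this
      have hinv' : P'.card + 1 ≤ (Finset.univ.image σnew).card := by
        rw [hP', Finset.card_insert_of_notMem hqP]
        omega
      -- new bad set is smaller
      have hBsub : (C ×ˢ Cᶜ).filter (fun r => ∀ p ∈ P', ¬ sep (cut' p) r.1 r.2)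
          ⊆ B.erase q := by
        intro r hr
        simp only [Finset.mem_filter, Finset.mem_product] at hr
        obtain ⟨⟨hr1, hr2⟩, hrns⟩ := hr
        have hrq : r ≠ q := by
          intro h
          subst h
          exact hrns r (Finset.mem_insert_self _ _) (by rw [hcutq]; exact Or.inl ⟨hxS, hyS⟩)
        refine Finset.mem_erase.mpr ⟨hrq, ?_⟩
        simp only [hBdef, Finset.mem_filter, Finset.mem_product]
        refine ⟨⟨hr1, hr2⟩, fun p hp => ?_⟩
        have := hrns p (Finset.mem_insert_of_mem hp)
        rwa [hcutP p hp] at this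
      have hBcard : ((C ×ˢ Cᶜ).filter (fun r => ∀ p ∈ P', ¬ sep (cut' p) r.1 r.2)).card ≤ k := by
        have h1 := Finset.card_le_card hBsub
        have h2 := Finset.card_erase_of_mem hq
        have h3 := Finset.card_pos.mpr ⟨q, hq⟩
        omega
      exact ih P' cut' hgood' hinv' hBcard

/-- Cut cover via Gomory–Hu trees: for any capacitated undirected graph on vertex set `V`
(edges indexed by `ι` with endpoints `ends` and capacities `u`) and any `C ⊆ V`, there are at
most `|V| - 1` pairs of vertices and, for each pair `(w,v)`, a minimum-capacity `w`-`v`-cut,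
such that every edge crossing `C` crosses one of the chosen minimum cuts. -/
theorem stmt5 {V ι : Type*} [Fintype V] [Fintype ι] [DecidableEq V]
    (ends : ι → V × V) (u : ι → ℕ) (C : Finset V) :
    ∃ (P : Finset (V × V)) (cut : V × V → Finset V),
      P.card ≤ Fintype.card V - 1 ∧
      (∀ p ∈ P, p.1 ≠ p.2 ∧ p.1 ∈ cut p ∧ p.2 ∉ cut p ∧
        ∀ S : Finset V, p.1 ∈ S → p.2 ∉ S → cutCap ends u (cut p) ≤ cutCap ends u S) ∧
      (∀ i : ι, crosses ends C i → ∃ p ∈ P, crosses ends (cut p) i) := by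
  rcases isEmpty_or_nonempty V with hV | hV
  · exact ⟨∅, fun _ => ∅, by simp, by simp, fun i _ => (hV.false (ends i).1).elim⟩
  · obtain ⟨P, cut, hcard, hgood, hcov⟩ := aux ends u C
      ((C ×ˢ Cᶜ).card)
      ∅ (fun _ => ∅) (by simp)
      (by have h1 : (Finset.image (fun _ : V => (∅ : Finset (V × V))) Finset.univ) = {∅} :=
            Finset.image_const Finset.univ_nonempty _
          simp [Finset.filter_empty, h1])
      (Finset.card_filter_le _ _)
    refine ⟨P, cut, hcard, hgood, fun i hi => ?_⟩
    rcases hi with ⟨h1, h2⟩ | ⟨h1, h2⟩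
    · obtain ⟨p, hp, hs⟩ := hcov (ends i).1 h1 (ends i).2 (Finset.mem_compl.mpr h2)
      exact ⟨p, hp, hs⟩
    · obtain ⟨p, hp, hs⟩ := hcov (ends i).2 h2 (ends i).1 (Finset.mem_compl.mpr h1)
      exact ⟨p, hp, hs.symm.imp (fun h => ⟨h.2, h.1⟩) (fun h => ⟨h.2, h.1⟩)⟩
end

section
/- The bound |V|-1 in the cut-cover lemma is sharp: in the star K_{1,n-1} with unit capacities, the cut separating the center from all leaves cannot be covered by fewer than n-1 cuts each of which is a minimum-capacity cut separating some pair of vertices. -/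
open Classical in
/-- Capacity of the cut `S` in the unit-capacity star `K_{1,n-1}` with center `0`:
the number of star edges (one per leaf `i ≠ 0`) with exactly one endpoint in `S`. -/
noncomputable def starCutCap (n : ℕ) [NeZero n] (S : Finset (Fin n)) : ℕ :=
  (Finset.univ.filter (fun i : Fin n => i ≠ 0 ∧
    (((0 : Fin n) ∈ S ∧ i ∉ S) ∨ ((0 : Fin n) ∉ S ∧ i ∈ S)))).card

/-! Every cut in the star separating two vertices can be replaced by one cutting a single edge
(`{w}` for a leaf `w`, or the complement of the leaf `v` when `w` is the center), so minimum
cuts cross at most one edge. Hence each cut of the cover covers at most one of the `n - 1`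
edges. -/

open Finset

open Classical in
noncomputable def starCutEdges (n : ℕ) [NeZero n] (S : Finset (Fin n)) : Finset (Fin n) :=
  univ.filter (fun i : Fin n => i ≠ 0 ∧
    (((0 : Fin n) ∈ S ∧ i ∉ S) ∨ ((0 : Fin n) ∉ S ∧ i ∈ S)))

section

variable {n : ℕ} [NeZero n]

theorem starCutCap_eq_card_starCutEdges (S : Finset (Fin n)) :
    starCutCap n S = #(starCutEdges n S) := rfl

theorem mem_starCutEdges {S : Finset (Fin n)} {i : Fin n} :
    i ∈ starCutEdges n S ↔
      i ≠ 0 ∧ (((0 : Fin n) ∈ S ∧ i ∉ S) ∨ ((0 : Fin n) ∉ S ∧ i ∈ S)) := by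
  simp [starCutEdges]

theorem starCutCap_le_one_of_starCutEdges_subset {S : Finset (Fin n)} {x : Fin n}
    (h : starCutEdges n S ⊆ {x}) : starCutCap n S ≤ 1 := by
  rw [starCutCap_eq_card_starCutEdges, ← card_singleton x]
  exact card_le_card h

theorem exists_separating_starCutCap_le_one {w v : Fin n} (hwv : w ≠ v) :
    ∃ S : Finset (Fin n), w ∈ S ∧ v ∉ S ∧ starCutCap n S ≤ 1 := by
  by_cases hw : w = 0
  · subst hw
    refine ⟨univ.erase v, by simpa using hwv, by simp, ?_⟩
    refine starCutCap_le_one_of_starCutEdges_subset (x := v) fun i hi => ?_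
    simp only [mem_starCutEdges] at hi
    simp only [mem_singleton]
    grind
  · refine ⟨{w}, mem_singleton_self w, by simpa using hwv.symm, ?_⟩
    refine starCutCap_le_one_of_starCutEdges_subset (x := w) fun i hi => ?_
    simp only [mem_starCutEdges, mem_singleton] at hi ⊢
    grind

theorem starCutCap_le_one_of_isMinCut {S : Finset (Fin n)} {w v : Fin n} (hwv : w ≠ v)
    (hmin : ∀ S' : Finset (Fin n), w ∈ S' → v ∉ S' → starCutCap n S ≤ starCutCap n S') :
    starCutCap n S ≤ 1 := by
  obtain ⟨S', hw, hv, hS'⟩ := exists_separating_starCutCap_le_one hwv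
  exact (hmin S' hw hv).trans hS'

end

theorem stmt6_general (n : ℕ) [NeZero n] (𝒞 : Finset (Finset (Fin n)))
    (hmin : ∀ S ∈ 𝒞, ∃ w v : Fin n, w ≠ v ∧ w ∈ S ∧ v ∉ S ∧
      ∀ S' : Finset (Fin n), w ∈ S' → v ∉ S' → starCutCap n S ≤ starCutCap n S')
    (hcover : ∀ i : Fin n, i ≠ 0 →
      ∃ S ∈ 𝒞, ((0 : Fin n) ∈ S ∧ i ∉ S) ∨ ((0 : Fin n) ∉ S ∧ i ∈ S)) :
    n - 1 ≤ 𝒞.card := by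
  have hcap : ∀ S ∈ 𝒞, #(starCutEdges n S) ≤ 1 := fun S hS => by
    obtain ⟨w, v, hwv, -, -, hS⟩ := hmin S hS
    rw [← starCutCap_eq_card_starCutEdges]
    exact starCutCap_le_one_of_isMinCut hwv hS
  have hleaves : univ.erase 0 ⊆ 𝒞.biUnion (starCutEdges n) := fun i hi => by
    have hi0 : i ≠ 0 := ne_of_mem_erase hi
    obtain ⟨S, hS, hcross⟩ := hcover i hi0
    exact mem_biUnion.mpr ⟨S, hS, mem_starCutEdges.mpr ⟨hi0, hcross⟩⟩
  calc n - 1 = #(univ.erase (0 : Fin n)) := by simp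
    _ ≤ #(𝒞.biUnion (starCutEdges n)) := card_le_card hleaves
    _ ≤ #𝒞 * 1 := card_biUnion_le_card_mul _ _ _ hcap
    _ = #𝒞 := mul_one _

/-- Sharpness of the cut-cover lemma: in the unit-capacity star `K_{1,n-1}` (center `0`,
leaves the `i ≠ 0`), any collection of cuts, each of which is a minimum-capacity cut
separating some pair of distinct vertices, that covers all `n - 1` star edges must contain
at least `n - 1` cuts. -/
theorem stmt6 (n : ℕ) [NeZero n] (hn : 2 ≤ n) (𝒞 : Finset (Finset (Fin n)))
    (hmin : ∀ S ∈ 𝒞, ∃ w v : Fin n, w ≠ v ∧ w ∈ S ∧ v ∉ S ∧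
      ∀ S' : Finset (Fin n), w ∈ S' → v ∉ S' → starCutCap n S ≤ starCutCap n S')
    (hcover : ∀ i : Fin n, i ≠ 0 →
      ∃ S ∈ 𝒞, ((0 : Fin n) ∈ S ∧ i ∉ S) ∨ ((0 : Fin n) ∉ S ∧ i ∈ S)) :
    n - 1 ≤ 𝒞.card :=
  stmt6_general n 𝒞 hmin hcover
end

section
/- In the greedy knapsack-cover procedure, let items e_1,…,e_m be ordered by nondecreasing efficiency ρ(e_i) = u(e_i)/c(e_i), and let j be minimal with c({e_1,…,e_j}) ≥ B'. Then for any T ⊆ E with c(T) ≥ B', u({e_1,…,e_{j-1}}) ≤ u(T). -/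
/-- Key exchange/efficiency bound for greedy knapsack cover: items `e_0, …, e_{m-1}` are
ordered by nondecreasing efficiency `u i / c i` (expressed by cross-multiplication), costs
are at least `1`, `B' ≤ c(E)`, and `j` is the least number such that the first `j` items have
total cost at least `B'`. Then the total value of the first `j - 1` items is at most the
total value of any cover `T` (any set with `c(T) ≥ B'`). -/
theorem stmt9 (m : ℕ) (u c : Fin m → ℕ) (hc : ∀ i, 1 ≤ c i)
    (hsort : ∀ i j : Fin m, i ≤ j → u i * c j ≤ u j * c i)
    (B' j : ℕ) (hB : B' ≤ ∑ i, c i)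
    (hjcov : B' ≤ ∑ i ∈ Finset.univ.filter (fun i : Fin m => (i : ℕ) < j), c i)
    (hjmin : ∀ j' < j, ∑ i ∈ Finset.univ.filter (fun i : Fin m => (i : ℕ) < j'), c i < B') :
    ∀ T : Finset (Fin m), B' ≤ ∑ e ∈ T, c e →
      ∑ i ∈ Finset.univ.filter (fun i : Fin m => (i : ℕ) < j - 1), u i ≤ ∑ e ∈ T, u e := by
  intro T hT
  set S := Finset.univ.filter (fun i : Fin m => (i : ℕ) < j - 1) with hSdef
  rcases Nat.eq_zero_or_pos j with hj0 | hjpos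
  · have : S = ∅ := by
      simp [hSdef, hj0, Finset.filter_eq_empty_iff]
    simp [this]
  -- cost of S is below B'
  have hSc : ∑ i ∈ S, c i < B' := hjmin (j - 1) (Nat.sub_lt hjpos one_pos)
  -- decompose sums over S and T
  have hdecS : ∀ f : Fin m → ℕ, ∑ i ∈ S ∩ T, f i + ∑ i ∈ S \ T, f i = ∑ i ∈ S, f i :=
    fun f => Finset.sum_inter_add_sum_sdiff S T f
  have hdecT : ∀ f : Fin m → ℕ, ∑ i ∈ S ∩ T, f i + ∑ i ∈ T \ S, f i = ∑ i ∈ T, f i := by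
    intro f
    rw [Finset.inter_comm]
    exact Finset.sum_inter_add_sum_sdiff T S f
  -- cost comparison of difference sets
  have hcAB : ∑ i ∈ S \ T, c i ≤ ∑ i ∈ T \ S, c i := by
    have h1 := hdecS c
    have h2 := hdecT c
    omega
  -- key exchange step
  have key : ∑ i ∈ S \ T, u i ≤ ∑ i ∈ T \ S, u i := by
    rcases Finset.eq_empty_or_nonempty (S \ T) with hA | hA
    · simp [hA]
    · set a := (S \ T).max' hA with ha
      have haS : a ∈ S := (Finset.mem_sdiff.mp ((S \ T).max'_mem hA)).1
      have haj : (a : ℕ) < j - 1 := by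
        simpa [hSdef] using haS
      -- a has max efficiency in S \ T
      have h1 : ∀ i ∈ S \ T, u i * c a ≤ u a * c i := by
        intro i hi
        exact hsort i a ((S \ T).le_max' i hi)
      -- every element of T \ S has efficiency ≥ that of a
      have h2 : ∀ b ∈ T \ S, u a * c b ≤ u b * c a := by
        intro b hb
        have hbS : b ∉ S := (Finset.mem_sdiff.mp hb).2
        have hbj : j - 1 ≤ (b : ℕ) := by
          by_contra h
          exact hbS (by simp [hSdef]; omega)
        exact hsort a b (by exact_mod_cast le_of_lt (lt_of_lt_of_le haj hbj))
      have step : (∑ i ∈ S \ T, u i) * c a ≤ (∑ i ∈ T \ S, u i) * c a := by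
        calc (∑ i ∈ S \ T, u i) * c a = ∑ i ∈ S \ T, u i * c a := by
              rw [Finset.sum_mul]
          _ ≤ ∑ i ∈ S \ T, u a * c i := Finset.sum_le_sum h1
          _ = u a * ∑ i ∈ S \ T, c i := by rw [Finset.mul_sum]
          _ ≤ u a * ∑ i ∈ T \ S, c i := Nat.mul_le_mul_left _ hcAB
          _ = ∑ i ∈ T \ S, u a * c i := by rw [Finset.mul_sum]
          _ ≤ ∑ i ∈ T \ S, u i * c a := Finset.sum_le_sum h2
          _ = (∑ i ∈ T \ S, u i) * c a := by rw [Finset.sum_mul]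
      exact Nat.le_of_mul_le_mul_right step (lt_of_lt_of_le one_pos (hc a))
  have h1 := hdecS u
  have h2 := hdecT u
  omega
end

section
/- Let H = (V,E) and let ℓ* be the maximum number of edges in a k-vertex induced subgraph of H. In the subdivision interdiction instance with budget B = |E| - ℓ*, the optimal interdiction objective (residual max flow) is at most k. -/
/-- Let `lstar` be the maximum number of edges in a `k`-vertex induced subgraph of `H`. In the
subdivision interdiction instance with budget `B = |E| - lstar` (where removing the cut
solution `R(C)` costs `|E| - |E_H[V \ C]|` and leaves residual flow `|V \ C|`), the optimal
interdiction objective is at most `k`: there is a budget-feasible cut solution with residual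
flow at most `k`. -/
theorem stmt14 {V : Type*} [Fintype V] [DecidableEq V] (H : SimpleGraph V)
    (k lstar : ℕ) (hkn : k ≤ Fintype.card V)
    (hl : IsGreatest {n : ℕ | ∃ S : Finset V, S.card = k ∧ (edgesIn H S).card = n} lstar) :
    ∃ C : Finset V,
      (edgesIn H Finset.univ).card - (edgesIn H (Finset.univ \ C)).card
          ≤ (edgesIn H Finset.univ).card - lstar ∧
      lstar ≤ (edgesIn H (Finset.univ \ C)).card ∧
      (Finset.univ \ C).card ≤ k := by
  obtain ⟨⟨S, hSk, hSl⟩, _⟩ := hl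
  refine ⟨Finset.univ \ S, ?_⟩
  have h : Finset.univ \ (Finset.univ \ S) = S := by
    rw [Finset.sdiff_sdiff_self_left, Finset.univ_inter]
  rw [h, hSl, hSk]
  exact ⟨le_rfl, le_rfl, le_rfl⟩
end

section
/- Let E = {e_1,…,e_m} be items ordered by nondecreasing efficiency, let S* be an optimal knapsack-cover solution with maximum-value element f*, and restrict to items of value less than u(f*) plus f* itself. Then any greedy cover S (f* plus a minimal efficiency-ordered prefix reaching cost B') satisfies u(S) ≤ u(S*) + u(f*) ≤ 2 u(S*). -/
/-!
Write `S* = {f*} ∪ T`; by the tie-breaking, every element of `T` is in the efficiency-sorted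
list `L`. If the greedy prefix has length `k + 1 > 0`, minimality of `j` gives
`c(L.take k) < B' - c(f*) ≤ c(T)`. Every element of `L.take k` is at most as efficient as the
pivot `L[k]`, and every element of `T` outside `L.take k` is at least as efficient, so the
exchange argument gives `u(L.take k) ≤ u(T) = u(S*) - u(f*)`. The last greedy item `L[k]` has
value below `u(f*)`, hence `u(S) ≤ u(S*) + u(f*)`, and `u(f*) ≤ u(S*)`.
-/

open Finset

theorem sum_le_sum_of_efficiency_threshold {ι R : Type*} [DecidableEq ι] [CommSemiring R]
    [LinearOrder R] [IsStrictOrderedRing R] (u c : ι → R) {a b : R} (ha : 0 ≤ a) (hb : 0 < b)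
    {Q T : Finset ι} (hQ : ∀ x ∈ Q, u x * b ≤ a * c x)
    (hT : ∀ x ∈ T, x ∉ Q → a * c x ≤ u x * b) (hcost : ∑ x ∈ Q, c x ≤ ∑ x ∈ T, c x) :
    ∑ x ∈ Q, u x ≤ ∑ x ∈ T, u x := by
  rw [← sum_inter_add_sum_sdiff Q T, ← sum_inter_add_sum_sdiff T Q, inter_comm T Q]
    at hcost ⊢
  refine add_le_add le_rfl (le_of_mul_le_mul_right ?_ hb)
  calc (∑ x ∈ Q \ T, u x) * b
      ≤ a * ∑ x ∈ Q \ T, c x := by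
        rw [sum_mul, mul_sum]
        exact sum_le_sum fun x hx => hQ x (mem_sdiff.1 hx).1
    _ ≤ a * ∑ x ∈ T \ Q, c x := mul_le_mul_of_nonneg_left (le_of_add_le_add_left hcost) ha
    _ ≤ (∑ x ∈ T \ Q, u x) * b := by
        rw [sum_mul, mul_sum]
        exact sum_le_sum fun x hx => hT x (mem_sdiff.1 hx).1 (mem_sdiff.1 hx).2

theorem List.Pairwise.rel_getElem_of_mem_drop {α : Type*} {R : α → α → Prop}
    {L : List α} (h : L.Pairwise R) (hR : ∀ a, R a a) {k : ℕ} (hk : k < L.length) {x : α}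
    (hx : x ∈ L.drop k) : R L[k] x := by
  have hdrop := h.drop (i := k)
  rw [List.drop_eq_getElem_cons hk] at hdrop hx
  rcases List.mem_cons.1 hx with rfl | hx
  · exact hR _
  · exact List.rel_of_pairwise_cons hdrop hx

theorem sum_take_le_of_sorted_by_efficiency {ι R : Type*} [DecidableEq ι] [CommSemiring R]
    [LinearOrder R] [IsStrictOrderedRing R] (u c : ι → R) {L : List ι} (hnodup : L.Nodup)
    (hsort : L.Pairwise (fun a b => u a * c b ≤ u b * c a)) {k : ℕ} (hk : k < L.length)
    (hu : 0 ≤ u L[k]) (hc : 0 < c L[k]) {T : Finset ι} (hTL : ∀ x ∈ T, x ∈ L)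
    (hcost : ((L.take k).map c).sum ≤ ∑ x ∈ T, c x) :
    ((L.take k).map u).sum ≤ ∑ x ∈ T, u x := by
  have hnodup_take := hnodup.sublist (L.take_sublist k)
  rw [← List.sum_toFinset u hnodup_take]
  rw [← List.sum_toFinset c hnodup_take] at hcost
  have hpivot : L[k] ∈ L.drop k := by
    rw [List.drop_eq_getElem_cons hk]
    exact List.mem_cons_self
  refine sum_le_sum_of_efficiency_threshold u c hu hc (fun x hx => ?_) (fun x hxT hxQ => ?_) hcost
  · exact hsort.rel_of_mem_take_of_mem_drop (List.mem_toFinset.1 hx) hpivot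
  · have hxL : x ∈ L.take k ++ L.drop k := by
      rw [L.take_append_drop k]
      exact hTL x hxT
    have hx_drop := (List.mem_append.1 hxL).resolve_left (mt List.mem_toFinset.2 hxQ)
    exact hsort.rel_getElem_of_mem_drop (fun _ => le_rfl) hk hx_drop

theorem stmt19_general {ι : Type*} [DecidableEq ι] (u c : ι → ℕ)
    (hc : ∀ e, 1 ≤ c e) (B' : ℕ)
    (Sstar : Finset ι) (hcov : B' ≤ ∑ e ∈ Sstar, c e)
    (fstar : ι) (hf : fstar ∈ Sstar)
    (hties : ∀ e ∈ Sstar, e ≠ fstar → u e < u fstar)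
    (L : List ι) (hnodup : L.Nodup)
    (hLmem : ∀ e : ι, e ∈ L ↔ (u e < u fstar ∧ e ≠ fstar))
    (hsort : L.Pairwise (fun a b => u a * c b ≤ u b * c a))
    (j : ℕ) (hj : j ≤ L.length)
    (hjmin : ∀ j' < j, c fstar + ((L.take j').map c).sum < B') :
    u fstar + ((L.take j).map u).sum ≤ (∑ e ∈ Sstar, u e) + u fstar ∧
    (∑ e ∈ Sstar, u e) + u fstar ≤ 2 * ∑ e ∈ Sstar, u e := by
  have hfu : u fstar ≤ ∑ e ∈ Sstar, u e := single_le_sum (fun _ _ => Nat.zero_le _) hf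
  refine ⟨?_, by omega⟩
  rcases j with _ | k
  · simp
  have hk : k < L.length := by omega
  have hrest : ∀ x ∈ Sstar.erase fstar, x ∈ L := fun x hx =>
    (hLmem x).2 ⟨hties x (mem_erase.1 hx).2 (mem_erase.1 hx).1, (mem_erase.1 hx).1⟩
  have hsplit_c := add_sum_erase Sstar c hf
  have hsplit_u := add_sum_erase Sstar u hf
  have hcost : ((L.take k).map c).sum ≤ ∑ x ∈ Sstar.erase fstar, c x := by
    have := hjmin k k.lt_succ_self
    omega
  have hprefix := sum_take_le_of_sorted_by_efficiency u c hnodup hsort hk (Nat.zero_le _)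
    (hc L[k]) hrest hcost
  have hlast : u L[k] < u fstar := ((hLmem _).1 (L.getElem_mem hk)).1
  rw [List.map_take, List.sum_take_succ _ _ (by simpa using hk), ← List.map_take,
    List.getElem_map]
  omega

/-- Refined accounting for the greedy knapsack-cover 2-approximation. Items `ι` have values
`u` and costs `c ≥ 1`, `B' ≤ c(E)` is the cover threshold, `Sstar` is an optimal cover with
maximum-value element `fstar` (ties broken so every other element of `Sstar` has value
strictly below `u fstar`). `L` lists the items of value strictly less than `u fstar` in
nondecreasing order of efficiency `u(e)/c(e)`, and `j` is minimal so that `{fstar}` together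
with the first `j` items of `L` has cost at least `B'`. Then the greedy value `u(S)`
satisfies `u(S) ≤ u(Sstar) + u(fstar) ≤ 2·u(Sstar)`. -/
theorem stmt19 {ι : Type*} [Fintype ι] [DecidableEq ι] (u c : ι → ℕ)
    (hc : ∀ e, 1 ≤ c e) (B' : ℕ) (hB : B' ≤ ∑ e, c e)
    (Sstar : Finset ι) (hcov : B' ≤ ∑ e ∈ Sstar, c e)
    (hopt : ∀ T : Finset ι, B' ≤ ∑ e ∈ T, c e → ∑ e ∈ Sstar, u e ≤ ∑ e ∈ T, u e)
    (fstar : ι) (hf : fstar ∈ Sstar) (hfmax : ∀ e ∈ Sstar, u e ≤ u fstar)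
    (hties : ∀ e ∈ Sstar, e ≠ fstar → u e < u fstar)
    (L : List ι) (hnodup : L.Nodup)
    (hLmem : ∀ e : ι, e ∈ L ↔ (u e < u fstar ∧ e ≠ fstar))
    (hsort : L.Pairwise (fun a b => u a * c b ≤ u b * c a))
    (j : ℕ) (hj : j ≤ L.length)
    (hjcov : B' ≤ c fstar + ((L.take j).map c).sum)
    (hjmin : ∀ j' < j, c fstar + ((L.take j').map c).sum < B') :
    u fstar + ((L.take j).map u).sum ≤ (∑ e ∈ Sstar, u e) + u fstar ∧
    (∑ e ∈ Sstar, u e) + u fstar ≤ 2 * ∑ e ∈ Sstar, u e :=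
  stmt19_general u c hc B' Sstar hcov fstar hf hties L hnodup hLmem hsort j hj hjmin
end
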